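/- The Baxter equivalence relation is compatible with the Schützenberger involution: for words u, v in A*, if u ≡_B v then u^# ≡_B v^#. -/

import Mathlib

open scoped Classical

/-- Baxter adjacency relations on words over the alphabet of natural numbers. -/
def BaxterAdj (w w' : List ℕ) : Prop :=
  (∃ (a b c d : ℕ) (u v : List ℕ), a ≤ b ∧ b < c ∧ c ≤ d ∧
      w = c :: (u ++ a :: d :: (v ++ [b])) ∧ w' = c :: (u ++ d :: a :: (v ++ [b]))) ∨
  (∃ (a b c d : ℕ) (u v : List ℕ), a < b ∧ b ≤ c ∧ c < d ∧
      w = b :: (u ++ d :: a :: (v ++ [c])) ∧ w' = b :: (u ++ a :: d :: (v ++ [c])))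

/-- One rewriting step: an adjacency applied inside a word (congruence context). -/
def BaxterStep (w w' : List ℕ) : Prop :=
  ∃ (p s u v : List ℕ), BaxterAdj u v ∧ w = p ++ u ++ s ∧ w' = p ++ v ++ s

/-- The Baxter congruence: the equivalence generated by the Baxter steps. -/
def BaxterEquiv : List ℕ → List ℕ → Prop := Relation.EqvGen BaxterStep

/-- Sylvester adjacency: a c u b ≡ c a u b when a ≤ b < c. -/
def SylvAdj (w w' : List ℕ) : Prop :=
  ∃ (a b c : ℕ) (u : List ℕ), a ≤ b ∧ b < c ∧
    w = a :: c :: (u ++ [b]) ∧ w' = c :: a :: (u ++ [b])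

def SylvStep (w w' : List ℕ) : Prop :=
  ∃ (p s u v : List ℕ), SylvAdj u v ∧ w = p ++ u ++ s ∧ w' = p ++ v ++ s

def SylvEquiv : List ℕ → List ℕ → Prop := Relation.EqvGen SylvStep

/-- #-sylvester adjacency: b u a c ≡ b u c a when a < b ≤ c. -/
def SylvHAdj (w w' : List ℕ) : Prop :=
  ∃ (a b c : ℕ) (u : List ℕ), a < b ∧ b ≤ c ∧
    w = b :: (u ++ [a, c]) ∧ w' = b :: (u ++ [c, a])

def SylvHStep (w w' : List ℕ) : Prop :=
  ∃ (p s u v : List ℕ), SylvHAdj u v ∧ w = p ++ u ++ s ∧ w' = p ++ v ++ s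

def SylvHEquiv : List ℕ → List ℕ → Prop := Relation.EqvGen SylvHStep

/-- The standardized word of `u`: position `i` receives the rank of the letter `u i`
(ties broken from left to right), ranks starting at `1`. -/
def std (u : List ℕ) : List ℕ :=
  (List.range u.length).map fun i =>
    ((List.range u.length).filter fun j =>
      decide (u.getD j 0 < u.getD i 0 ∨ (u.getD j 0 = u.getD i 0 ∧ j < i))).length + 1

/-- The maximal letter of a word. -/
def wordMax (u : List ℕ) : ℕ := u.foldr max 0

/-- The Schützenberger transformation: reverse and complement each letter w.r.t. max + 1. -/
def schutz (u : List ℕ) : List ℕ := u.reverse.map fun x => wordMax u + 1 - x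

/-- Labeled binary trees. -/
inductive BT where
  | leaf : BT
  | node : BT → ℕ → BT → BT
deriving DecidableEq

/-- Leaf insertion into a left binary search tree. -/
def leafInsL : BT → ℕ → BT
  | .leaf, a => .node .leaf a .leaf
  | .node l b r, a => if a < b then .node (leafInsL l a) b r else .node l b (leafInsL r a)

/-- Leaf insertion into a right binary search tree. -/
def leafInsR : BT → ℕ → BT
  | .leaf, a => .node .leaf a .leaf
  | .node l b r, a => if a ≤ b then .node (leafInsR l a) b r else .node l b (leafInsR r a)

/-- The lower restricted tree `T_{≤ a}` of a right binary search tree. -/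
def splitLE : BT → ℕ → BT
  | .leaf, _ => .leaf
  | .node l b r, a => if b ≤ a then .node l b (splitLE r a) else splitLE l a

/-- The higher restricted tree `T_{> a}` of a right binary search tree. -/
def splitGT : BT → ℕ → BT
  | .leaf, _ => .leaf
  | .node l b r, a => if b ≤ a then splitGT r a else .node (splitGT l a) b r

/-- Root insertion into a right binary search tree. -/
def rootIns (t : BT) (a : ℕ) : BT := .node (splitLE t a) a (splitGT t a)

/-- The left tree of the P-symbol: leaf insertions from left to right. -/
def insL (u : List ℕ) : BT := u.foldl leafInsL .leaf

/-- The right tree of the P-symbol: root insertions from left to right. -/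
def insR (u : List ℕ) : BT := u.foldl rootIns .leaf

/-- The P-symbol of a word. -/
def Psymb (u : List ℕ) : BT × BT := (insL u, insR u)

/-- Unlabeled binary trees. -/
inductive UBT where
  | leaf : UBT
  | node : UBT → UBT → UBT
deriving DecidableEq

/-- The shape of a labeled binary tree. -/
def shape : BT → UBT
  | .leaf => .leaf
  | .node l _ r => .node (shape l) (shape r)

/-- The shape of the P-symbol of a word. -/
def Pshape (u : List ℕ) : UBT × UBT := (shape (insL u), shape (insR u))

/-- Number of internal nodes. -/
def sizeU : UBT → ℕ
  | .leaf => 0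
  | .node l r => sizeU l + sizeU r + 1

/-- Orientations of the leaves, from left to right: `true` means right-oriented
(the leaf is the right child of its parent); the parameter is the orientation
assigned if the tree is reduced to a leaf. -/
def loU : UBT → Bool → List Bool
  | .leaf, b => [b]
  | .node l r, _ => loU l false ++ loU r true

/-- Leaf orientations of a labeled binary tree. -/
def loB : BT → Bool → List Bool
  | .leaf, b => [b]
  | .node l _ r, _ => loB l false ++ loB r true

/-- The canopy: orientations of the leaves except the first and the last one. -/
def canU (t : UBT) : List Bool := ((loU t false).drop 1).dropLast

/-- A pair of twin binary trees: same number of nodes and complementary canopies. -/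
def IsTwin (J : UBT × UBT) : Prop :=
  sizeU J.1 = sizeU J.2 ∧ (canU J.1).length = (canU J.2).length ∧
    ∀ i < (canU J.1).length, (canU J.1).getD i false ≠ (canU J.2).getD i false

/-- `σ` is (the word of) a permutation of `{1, …, n}`. -/
def IsPerm (n : ℕ) (σ : List ℕ) : Prop := σ.Perm (List.range' 1 n)

/-- Covering-type step of the right permutohedron (weak) order: exchange of two
adjacent letters `a < b`. -/
def PermutoStep (σ ν : List ℕ) : Prop :=
  ∃ (p s : List ℕ) (a b : ℕ), a < b ∧ σ = p ++ a :: b :: s ∧ ν = p ++ b :: a :: s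

/-- The right permutohedron (weak) order. -/
def PermutoLe : List ℕ → List ℕ → Prop := Relation.ReflTransGen PermutoStep

/-- Baxter permutations: avoiding the generalized patterns 2-41-3 and 3-14-2. -/
def IsBaxterPerm (σ : List ℕ) : Prop :=
  ∀ i j k, i < j → j + 1 < k → k < σ.length →
    ¬(σ.getD (j+1) 0 < σ.getD i 0 ∧ σ.getD i 0 < σ.getD k 0 ∧ σ.getD k 0 < σ.getD j 0) ∧
    ¬(σ.getD j 0 < σ.getD k 0 ∧ σ.getD k 0 < σ.getD i 0 ∧ σ.getD i 0 < σ.getD (j+1) 0)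

/-! Reversing a word and complementing its letters with respect to `M + 1` maps each of the two
defining Baxter relations to an instance of the same relation, with `(a, b, c, d)` replaced by
`(M + 1 - d, M + 1 - c, M + 1 - b, M + 1 - a)`, as long as no letter exceeds `M`. Baxter-equivalent
words are rearrangements of each other, so they have the same maximum `M`, and `#` is this single
reverse-complement on both sides. -/

theorem Relation.EqvGen.map_of_invariant {α β : Type*} {r : α → α → Prop} {s : β → β → Prop}
    {P : α → Prop} (f : α → β) (hP : ∀ a b, r a b → (P a ↔ P b))
    (hf : ∀ a b, r a b → P a → s (f a) (f b)) {x y : α} (h : Relation.EqvGen r x y) (hx : P x) :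
    Relation.EqvGen s (f x) (f y) := by
  have hPeqv : ∀ a b, Relation.EqvGen r a b → (P a ↔ P b) := fun a b hab =>
    (Equivalence.eqvGen_iff (r := fun a b => P a ↔ P b) ⟨fun _ => .rfl, .symm, .trans⟩).mp
      (hab.mono hP)
  induction h with
  | rel a b hab => exact .rel _ _ (hf a b hab hx)
  | refl _ => exact .refl _
  | symm a b hab ih => exact .symm _ _ (ih ((hPeqv a b hab).mpr hx))
  | trans a b c hab _ ih₁ ih₂ => exact .trans _ _ _ (ih₁ hx) (ih₂ ((hPeqv a b hab).mp hx))

lemma BaxterAdj.perm {x y : List ℕ} (h : BaxterAdj x y) : x.Perm y := by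
  rcases h with ⟨a, -, c, d, u, -, -, -, -, rfl, rfl⟩ | ⟨a, b, -, d, u, -, -, -, -, rfl, rfl⟩
  · exact ((List.Perm.swap d a _).append_left u).cons c
  · exact ((List.Perm.swap a d _).append_left u).cons b

lemma BaxterStep.perm {x y : List ℕ} (h : BaxterStep x y) : x.Perm y := by
  obtain ⟨p, s, u, v, hadj, rfl, rfl⟩ := h
  exact (hadj.perm.append_left p).append_right s

lemma BaxterEquiv.perm {x y : List ℕ} (h : BaxterEquiv x y) : x.Perm y :=
  (List.Perm.eqv _).eqvGen_iff.mp (h.mono fun _ _ => BaxterStep.perm)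

lemma List.Perm.wordMax_eq {x y : List ℕ} (h : x.Perm y) : wordMax x = wordMax y :=
  h.foldr_eq 0

lemma le_wordMax {u : List ℕ} {l : ℕ} (hl : l ∈ u) : l ≤ wordMax u :=
  List.le_max_of_le' 0 hl le_rfl

def compRev (M : ℕ) (u : List ℕ) : List ℕ := (u.map fun x => M + 1 - x).reverse

@[simp]
lemma compRev_cons (M a : ℕ) (u : List ℕ) : compRev M (a :: u) = compRev M u ++ [M + 1 - a] := by
  simp [compRev]

@[simp]
lemma compRev_append (M : ℕ) (u v : List ℕ) :
    compRev M (u ++ v) = compRev M v ++ compRev M u := by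
  simp [compRev]

@[simp]
lemma compRev_nil (M : ℕ) : compRev M [] = [] := rfl

lemma schutz_eq_compRev (u : List ℕ) : schutz u = compRev (wordMax u) u := by
  simp [schutz, compRev]

lemma BaxterAdj.compRev_of_forall_le {M : ℕ} {x y : List ℕ} (h : BaxterAdj x y)
    (hx : ∀ l ∈ x, l ≤ M) :
    BaxterAdj (compRev M x) (compRev M y) := by
  rcases h with ⟨a, b, c, d, u, v, hab, hbc, hcd, rfl, rfl⟩ |
      ⟨a, b, c, d, u, v, hab, hbc, hcd, rfl, rfl⟩ <;>
    [left; right] <;>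
    · have hd : d ≤ M := hx d (by simp)
      refine ⟨M + 1 - d, M + 1 - c, M + 1 - b, M + 1 - a, compRev M v, compRev M u,
        by omega, by omega, by omega, ?_, ?_⟩ <;> simp

lemma BaxterStep.compRev_of_forall_le {M : ℕ} {x y : List ℕ} (h : BaxterStep x y)
    (hx : ∀ l ∈ x, l ≤ M) :
    BaxterStep (compRev M x) (compRev M y) := by
  obtain ⟨p, s, u, v, hadj, rfl, rfl⟩ := h
  exact ⟨compRev M s, compRev M p, compRev M u, compRev M v,
    hadj.compRev_of_forall_le fun l hl => hx l (by simp [hl]), by simp, by simp⟩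

lemma BaxterEquiv.compRev_of_forall_le {M : ℕ} {x y : List ℕ} (h : BaxterEquiv x y)
    (hx : ∀ l ∈ x, l ≤ M) :
    BaxterEquiv (compRev M x) (compRev M y) :=
  Relation.EqvGen.map_of_invariant (P := fun w => ∀ l ∈ w, l ≤ M) (compRev M)
    (fun _ _ hab => forall_congr' fun _ => imp_congr_left hab.perm.mem_iff)
    (fun _ _ hab => hab.compRev_of_forall_le) h hx

/-- the Baxter equivalence is compatible with the Schützenberger
involution. -/
theorem baxter_compatible_with_schutzenberger (u v : List ℕ) :
    BaxterEquiv u v → BaxterEquiv (schutz u) (schutz v) := by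
  intro h
  rw [schutz_eq_compRev, schutz_eq_compRev, ← h.perm.wordMax_eq]
  exact h.compRev_of_forall_le fun _ => le_wordMax
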